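/- arXiv:1107.1944 — 2 statements merged into one kernel-verified Lean document; each statement's English description precedes it below -/
import Mathlib

section
/- Let J be an n×n real symmetric positive semidefinite matrix of rank r, written J = U_r Σ U_rᵀ with U_r ∈ ℝ^{n×r} having orthonormal columns and Σ invertible diagonal with positive entries. For any V ∈ ℝ^{n×r} with VᵀV = I_r such that Vᵀ J V is invertible, and for every i, the i-th largest eigenvalue satisfies λ_i(V (Vᵀ J V)⁻¹ Vᵀ) ≥ λ_i(J†), where J† is the Moore-Penrose pseudoinverse of J. -/
open Matrix

/-- The four Penrose conditions characterizing the Moore-Penrose pseudoinverse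
(over ℝ, conjugate transpose = transpose). -/
def IsMoorePenrose {n : ℕ} (A B : Matrix (Fin n) (Fin n) ℝ) : Prop :=
  A * B * A = A ∧ B * A * B = B ∧ (A * B)ᵀ = A * B ∧ (B * A)ᵀ = B * A

/-- `eigDesc hA i` is the `i`-th largest eigenvalue (counted with multiplicity)
of the symmetric real matrix `A`. -/
noncomputable def eigDesc {n : ℕ} {A : Matrix (Fin n) (Fin n) ℝ}
    (hA : A.IsHermitian) (i : Fin n) : ℝ :=
  hA.eigenvalues (Tuple.sort hA.eigenvalues i.rev)

/-!
Write `W = Uᵀ V`; it is invertible because `Vᵀ J V = Wᵀ S W`, and so is `S`. Then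
`J† = U S⁻¹ Uᵀ`, and for the contraction `T = (V Vᵀ)(U Uᵀ)` (a product of two orthogonal
projections) one checks `J† = Tᵀ M T`, where `M = V (Vᵀ J V)⁻¹ Vᵀ` is positive semidefinite.
Compressing a positive semidefinite matrix by a contraction cannot increase any ordered
eigenvalue: if `λ = λᵢ(Tᵀ M T) > 0`, then `T` is injective on the span `F` of the top `i + 1`
eigenvectors of `Tᵀ M T`, the Rayleigh quotient of `M` on `T(F)` is at least `λ` because `T`
shrinks norms, and Courant–Fischer gives `λ ≤ λᵢ(M)`.
-/

open scoped RealInnerProductSpace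
open Finset Module Submodule

namespace IsMoorePenrose

variable {n : ℕ} {A B C : Matrix (Fin n) (Fin n) ℝ}

theorem unique (hB : IsMoorePenrose A B) (hC : IsMoorePenrose A C) : B = C := by
  obtain ⟨hB₁, hB₂, hB₃, hB₄⟩ := hB
  obtain ⟨hC₁, hC₂, hC₃, hC₄⟩ := hC
  have hAt : Aᵀ = Aᵀ * Cᵀ * Aᵀ := by
    simpa only [transpose_mul, Matrix.mul_assoc] using (congrArg transpose hC₁).symm
  have hAB : A * B = A * C := calc
    A * B = Bᵀ * Aᵀ := by rw [← transpose_mul, hB₃]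
    _ = (A * B)ᵀ * (A * C)ᵀ := by
      rw [hAt, transpose_mul, transpose_mul]; simp only [Matrix.mul_assoc]
    _ = A * B * A * C := by rw [hB₃, hC₃]; simp only [Matrix.mul_assoc]
    _ = A * C := by rw [hB₁]
  have hBA : B * A = C * A := calc
    B * A = Aᵀ * Bᵀ := by rw [← transpose_mul, hB₄]
    _ = (C * A)ᵀ * (B * A)ᵀ := by
      rw [hAt, transpose_mul, transpose_mul]; simp only [Matrix.mul_assoc]
    _ = C * (A * B * A) := by rw [hB₄, hC₄]; simp only [Matrix.mul_assoc]
    _ = C * A := by rw [hB₁]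
  calc B = B * A * B := hB₂.symm
    _ = C * A * C := by rw [hBA, Matrix.mul_assoc, hAB, ← Matrix.mul_assoc]
    _ = C := hC₂

end IsMoorePenrose

theorem OrthonormalBasis.inner_eq_zero_of_mem_span_image {ι 𝕜 E : Type*} [Fintype ι] [RCLike 𝕜]
    [NormedAddCommGroup E] [InnerProductSpace 𝕜 E] (b : OrthonormalBasis ι 𝕜 E) {s : Set ι}
    {x : E} (hx : x ∈ span 𝕜 (b '' s)) {j : ι} (hj : j ∉ s) : inner 𝕜 (b j) x = 0 := by
  obtain ⟨l, hl, rfl⟩ := (Finsupp.mem_span_image_iff_linearCombination 𝕜).mp hx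
  rw [b.orthonormal.inner_right_finsupp]
  exact Finsupp.notMem_support_iff.mp fun h => hj (hl h)

theorem OrthonormalBasis.finrank_span_image {ι 𝕜 E : Type*} [Fintype ι] [RCLike 𝕜]
    [NormedAddCommGroup E] [InnerProductSpace 𝕜 E] (b : OrthonormalBasis ι 𝕜 E) (s : Finset ι) :
    finrank 𝕜 (span 𝕜 (b '' s)) = #s := by
  rw [Set.image_eq_range]
  exact (finrank_span_eq_card (b.orthonormal.linearIndependent.comp _ Subtype.val_injective)).trans
    (Fintype.card_coe s)

theorem Tuple.sub_le_card_filter_sort_le {n : ℕ} {α : Type*} [LinearOrder α] (f : Fin n → α)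
    (k : Fin n) : n - k ≤ #{j | f (sort f k) ≤ f j} :=
  (Fin.card_Ici k).symm.le.trans <| card_le_card_of_injOn (sort f)
    (fun j hj => by simpa using monotone_sort f (mem_Ici.mp hj)) (sort f).injective.injOn

theorem Tuple.succ_le_card_filter_le_sort {n : ℕ} {α : Type*} [LinearOrder α] (f : Fin n → α)
    (k : Fin n) : k + 1 ≤ #{j | f j ≤ f (sort f k)} :=
  (Fin.card_Iic k).symm.le.trans <| card_le_card_of_injOn (sort f)
    (fun j hj => by simpa using monotone_sort f (mem_Iic.mp hj)) (sort f).injective.injOn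

namespace Matrix

section Isometry

variable {m n : Type*} [Fintype m] [Fintype n] [DecidableEq m] [DecidableEq n]

theorem inner_toEuclideanLin_transpose (A : Matrix m n ℝ) (x : EuclideanSpace ℝ n)
    (y : EuclideanSpace ℝ m) : ⟪x, toEuclideanLin Aᵀ y⟫ = ⟪toEuclideanLin A x, y⟫ := by
  rw [← conjTranspose_eq_transpose_of_trivial, toEuclideanLin_conjTranspose_eq_adjoint,
    LinearMap.adjoint_inner_right]

variable {U : Matrix m n ℝ}

theorem norm_toEuclideanLin_of_transpose_mul_self (hU : Uᵀ * U = 1) (x : EuclideanSpace ℝ n) :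
    ‖toEuclideanLin U x‖ = ‖x‖ := by
  rw [norm_eq_sqrt_real_inner, ← inner_toEuclideanLin_transpose, ← LinearMap.comp_apply,
    ← toLpLin_mul_same, hU, toLpLin_one, LinearMap.id_apply, ← norm_eq_sqrt_real_inner]

theorem norm_toEuclideanLin_transpose_le (hU : Uᵀ * U = 1) (x : EuclideanSpace ℝ m) :
    ‖toEuclideanLin Uᵀ x‖ ≤ ‖x‖ := by
  set y := toEuclideanLin Uᵀ x
  have : ‖y‖ * ‖y‖ ≤ ‖x‖ * ‖y‖ := calc
    ‖y‖ * ‖y‖ = ⟪x, toEuclideanLin U y⟫ := by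
      rw [← real_inner_self_eq_norm_mul_norm, ← transpose_transpose U,
        inner_toEuclideanLin_transpose, transpose_transpose, real_inner_comm]
    _ ≤ ‖x‖ * ‖y‖ := by
      rw [← norm_toEuclideanLin_of_transpose_mul_self hU y]; exact real_inner_le_norm _ _
  nlinarith [norm_nonneg x, norm_nonneg y]

theorem norm_toEuclideanLin_mul_transpose_le (hU : Uᵀ * U = 1) (x : EuclideanSpace ℝ m) :
    ‖toEuclideanLin (U * Uᵀ) x‖ ≤ ‖x‖ := by
  rw [toLpLin_mul_same, LinearMap.comp_apply, norm_toEuclideanLin_of_transpose_mul_self hU]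
  exact norm_toEuclideanLin_transpose_le hU x

end Isometry

section Spectrum

variable {ι : Type*} [Fintype ι] [DecidableEq ι] {A : Matrix ι ι ℝ} (hA : A.IsHermitian)

theorem IsHermitian.toEuclideanLin_eigenvectorBasis (j : ι) :
    toEuclideanLin A (hA.eigenvectorBasis j) = hA.eigenvalues j • hA.eigenvectorBasis j :=
  WithLp.ofLp_injective 2 (by simpa [toLpLin_apply] using hA.mulVec_eigenvectorBasis j)

theorem IsHermitian.inner_toEuclideanLin_self_eq_sum (x : EuclideanSpace ℝ ι) :
    ⟪x, toEuclideanLin A x⟫ = ∑ j, hA.eigenvalues j * ⟪hA.eigenvectorBasis j, x⟫ ^ 2 := by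
  rw [← hA.eigenvectorBasis.sum_inner_mul_inner]
  congr 1 with j
  rw [← isSymmetric_toEuclideanLin_iff.mpr hA, hA.toEuclideanLin_eigenvectorBasis,
    real_inner_smul_left, real_inner_comm x]
  ring

theorem IsHermitian.inner_toEuclideanLin_self_le_of_mem_span {s : Set ι} {μ : ℝ}
    (hs : ∀ j ∈ s, hA.eigenvalues j ≤ μ) {x : EuclideanSpace ℝ ι}
    (hx : x ∈ span ℝ (hA.eigenvectorBasis '' s)) : ⟪x, toEuclideanLin A x⟫ ≤ μ * ‖x‖ ^ 2 := by
  rw [hA.inner_toEuclideanLin_self_eq_sum, ← hA.eigenvectorBasis.sum_sq_inner_right, mul_sum]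
  refine sum_le_sum fun j _ => ?_
  by_cases hj : j ∈ s
  · exact mul_le_mul_of_nonneg_right (hs j hj) (sq_nonneg _)
  · simp [hA.eigenvectorBasis.inner_eq_zero_of_mem_span_image hx hj]

theorem IsHermitian.le_inner_toEuclideanLin_self_of_mem_span {s : Set ι} {μ : ℝ}
    (hs : ∀ j ∈ s, μ ≤ hA.eigenvalues j) {x : EuclideanSpace ℝ ι}
    (hx : x ∈ span ℝ (hA.eigenvectorBasis '' s)) : μ * ‖x‖ ^ 2 ≤ ⟪x, toEuclideanLin A x⟫ := by
  rw [hA.inner_toEuclideanLin_self_eq_sum, ← hA.eigenvectorBasis.sum_sq_inner_right, mul_sum]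
  refine sum_le_sum fun j _ => ?_
  by_cases hj : j ∈ s
  · exact mul_le_mul_of_nonneg_right (hs j hj) (sq_nonneg _)
  · simp [hA.eigenvectorBasis.inner_eq_zero_of_mem_span_image hx hj]

end Spectrum

section CourantFischer

variable {n : ℕ} {A : Matrix (Fin n) (Fin n) ℝ} (hA : A.IsHermitian)

theorem IsHermitian.succ_le_card_filter_eigDesc_le (i : Fin n) :
    i + 1 ≤ #{j | eigDesc hA i ≤ hA.eigenvalues j} := by
  have := Tuple.sub_le_card_filter_sort_le hA.eigenvalues i.rev
  rw [Fin.val_rev] at this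
  exact (show i + 1 = n - (n - (i + 1)) by omega).le.trans this

theorem IsHermitian.sub_le_card_filter_le_eigDesc (i : Fin n) :
    n - i ≤ #{j | hA.eigenvalues j ≤ eigDesc hA i} := by
  have := Tuple.succ_le_card_filter_le_sort hA.eigenvalues i.rev
  rw [Fin.val_rev] at this
  exact (show n - i = n - (i + 1) + 1 by omega).le.trans this

theorem IsHermitian.exists_finrank_le_forall_eigDesc_mul_le (i : Fin n) :
    ∃ F : Submodule ℝ (EuclideanSpace ℝ (Fin n)), i + 1 ≤ finrank ℝ F ∧
      ∀ x ∈ F, eigDesc hA i * ‖x‖ ^ 2 ≤ ⟪x, toEuclideanLin A x⟫ := by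
  refine ⟨span ℝ (hA.eigenvectorBasis '' ↑({j | eigDesc hA i ≤ hA.eigenvalues j} : Finset _)),
    ?_, fun x hx => hA.le_inner_toEuclideanLin_self_of_mem_span (fun j hj => ?_) hx⟩
  · rw [OrthonormalBasis.finrank_span_image]
    exact hA.succ_le_card_filter_eigDesc_le i
  · simpa using hj

theorem IsHermitian.le_eigDesc_of_forall_mem {i : Fin n} {μ : ℝ}
    (E : Submodule ℝ (EuclideanSpace ℝ (Fin n))) (hE : i + 1 ≤ finrank ℝ E)
    (h : ∀ x ∈ E, μ * ‖x‖ ^ 2 ≤ ⟪x, toEuclideanLin A x⟫) : μ ≤ eigDesc hA i := by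
  set F := span ℝ (hA.eigenvectorBasis '' ↑({j | hA.eigenvalues j ≤ eigDesc hA i} : Finset _))
  have hF : n - i ≤ finrank ℝ F := by
    rw [OrthonormalBasis.finrank_span_image]
    exact hA.sub_le_card_filter_le_eigDesc i
  obtain ⟨x, hxE, hxF, hx⟩ : ∃ x ∈ E, x ∈ F ∧ x ≠ 0 := by
    by_contra! hEF
    have := Submodule.finrank_add_finrank_le_of_disjoint (Submodule.disjoint_def.mpr hEF)
    rw [finrank_euclideanSpace_fin] at this
    omega
  have := (h x hxE).trans
    (hA.inner_toEuclideanLin_self_le_of_mem_span (fun j hj => by simpa using hj) hxF)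
  exact le_of_mul_le_mul_right this (by positivity)

theorem eigDesc_le_of_eq_transpose_mul_mul {B T : Matrix (Fin n) (Fin n) ℝ} (hB : B.PosSemidef)
    (hABT : A = Tᵀ * B * T) (hT : ∀ x, ‖toEuclideanLin T x‖ ≤ ‖x‖) (i : Fin n) :
    eigDesc hA i ≤ eigDesc hB.isHermitian i := by
  rcases le_or_gt (eigDesc hA i) 0 with hneg | hpos
  · exact hneg.trans (hB.eigenvalues_nonneg _)
  have hquad (x) :
      ⟪x, toEuclideanLin A x⟫ = ⟪toEuclideanLin T x, toEuclideanLin B (toEuclideanLin T x)⟫ := by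
    rw [hABT, toLpLin_mul_same, toLpLin_mul_same, LinearMap.comp_apply, LinearMap.comp_apply,
      inner_toEuclideanLin_transpose]
  obtain ⟨F, hF, hAF⟩ := hA.exists_finrank_le_forall_eigDesc_mul_le i
  have hinj : Function.Injective (toEuclideanLin T ∘ₗ F.subtype) := by
    refine (injective_iff_map_eq_zero _).mpr fun ⟨x, hx⟩ hTx => ?_
    have := hAF x hx
    rw [hquad, show toEuclideanLin T x = 0 from hTx, inner_zero_left] at this
    have : ‖x‖ ^ 2 ≤ 0 := nonpos_of_mul_nonpos_right this hpos
    simpa using this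
  refine hB.isHermitian.le_eigDesc_of_forall_mem (LinearMap.range (toEuclideanLin T ∘ₗ F.subtype))
    (by rwa [LinearMap.finrank_range_of_inj hinj]) ?_
  rintro _ ⟨⟨x, hx⟩, rfl⟩
  calc eigDesc hA i * ‖toEuclideanLin T x‖ ^ 2 ≤ eigDesc hA i * ‖x‖ ^ 2 := by gcongr; exact hT x
    _ ≤ _ := hAF x hx
    _ = _ := hquad x

end CourantFischer

theorem mul_inv_transpose_mul_mul_mul_transpose {m α : Type*} [Fintype m] [DecidableEq m]
    [CommRing α] {W : Matrix m m α} (hW : IsUnit W.det) (S : Matrix m m α) :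
    W * (Wᵀ * S * W)⁻¹ * Wᵀ = S⁻¹ := by
  have hWt : IsUnit Wᵀ.det := by rwa [det_transpose]
  rw [mul_inv_rev, mul_inv_rev, Matrix.mul_assoc, Matrix.mul_assoc, Matrix.mul_assoc,
    nonsing_inv_mul _ hWt, Matrix.mul_one, mul_nonsing_inv_cancel_left _ _ hW]

theorem mul_inv_mul_transpose_eq_transpose_mul_mul {n ι : Type*} [Fintype n]
    [Fintype ι] [DecidableEq ι] {U V : Matrix n ι ℝ} (hV : Vᵀ * V = 1)
    (hW : IsUnit (Uᵀ * V).det) (S : Matrix ι ι ℝ) :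
    U * S⁻¹ * Uᵀ =
      (V * Vᵀ * (U * Uᵀ))ᵀ * (V * (Vᵀ * (U * S * Uᵀ) * V)⁻¹ * Vᵀ) * (V * Vᵀ * (U * Uᵀ)) := by
  have hVV (X : Matrix ι n ℝ) : Vᵀ * (V * X) = X := by rw [← Matrix.mul_assoc, hV, Matrix.one_mul]
  rw [← mul_inv_transpose_mul_mul_mul_transpose hW S]
  simp only [transpose_mul, transpose_transpose, Matrix.mul_assoc, hVV]

end Matrix

theorem isMoorePenrose_mul_mul_transpose {n : ℕ} {ι : Type*} [Fintype ι] [DecidableEq ι]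
    {U : Matrix (Fin n) ι ℝ} (hU : Uᵀ * U = 1) {S : Matrix ι ι ℝ} (hS : IsUnit S.det) :
    IsMoorePenrose (U * S * Uᵀ) (U * S⁻¹ * Uᵀ) := by
  have hUU {p : Type} (X : Matrix ι p ℝ) : Uᵀ * (U * X) = X := by
    rw [← Matrix.mul_assoc, hU, Matrix.one_mul]
  refine ⟨?_, ?_, ?_, ?_⟩ <;>
    simp only [Matrix.mul_assoc, hUU, mul_nonsing_inv_cancel_left _ _ hS,
      nonsing_inv_mul_cancel_left _ _ hS, transpose_mul, transpose_transpose]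

theorem stmt6_general {n r : ℕ}
    (J : Matrix (Fin n) (Fin n) ℝ) (hJ : J.PosSemidef)
    (U : Matrix (Fin n) (Fin r) ℝ) (S : Matrix (Fin r) (Fin r) ℝ)
    (hU : Uᵀ * U = 1) (hdecomp : J = U * S * Uᵀ)
    (V : Matrix (Fin n) (Fin r) ℝ) (hV : Vᵀ * V = 1)
    (hdet : IsUnit (Vᵀ * J * V).det)
    (hM : (V * (Vᵀ * J * V)⁻¹ * Vᵀ).IsHermitian)
    (K : Matrix (Fin n) (Fin n) ℝ) (hKmp : IsMoorePenrose J K)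
    (hK : K.IsHermitian) :
    ∀ i : Fin n, eigDesc hK i ≤ eigDesc hM i := by
  have hMpsd : (V * (Vᵀ * J * V)⁻¹ * Vᵀ).PosSemidef := by
    simpa using (hJ.conjTranspose_mul_mul_same V).inv.mul_mul_conjTranspose_same V
  subst hdecomp
  obtain ⟨⟨-, hS⟩, hW⟩ : (IsUnit (Uᵀ * V)ᵀ.det ∧ IsUnit S.det) ∧ IsUnit (Uᵀ * V).det := by
    simpa only [← IsUnit.mul_iff, ← det_mul, transpose_mul, transpose_transpose,
      Matrix.mul_assoc] using hdet
  have hKeq := hKmp.unique (isMoorePenrose_mul_mul_transpose hU hS)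
  intro i
  refine eigDesc_le_of_eq_transpose_mul_mul hK hMpsd (T := V * Vᵀ * (U * Uᵀ)) ?_ (fun x => ?_) i
  · rw [hKeq]
    exact mul_inv_mul_transpose_eq_transpose_mul_mul hV hW S
  · rw [toLpLin_mul_same, LinearMap.comp_apply]
    exact (norm_toEuclideanLin_mul_transpose_le hV _).trans
      (norm_toEuclideanLin_mul_transpose_le hU x)

theorem stmt6 {n r : ℕ} (hrn : r ≤ n)
    (J : Matrix (Fin n) (Fin n) ℝ) (hJ : J.PosSemidef) (hrank : J.rank = r)
    (U : Matrix (Fin n) (Fin r) ℝ) (S : Matrix (Fin r) (Fin r) ℝ)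
    (d : Fin r → ℝ) (hd : ∀ i, 0 < d i) (hS : S = Matrix.diagonal d)
    (hU : Uᵀ * U = 1) (hdecomp : J = U * S * Uᵀ)
    (V : Matrix (Fin n) (Fin r) ℝ) (hV : Vᵀ * V = 1)
    (hdet : IsUnit (Vᵀ * J * V).det)
    (hM : (V * (Vᵀ * J * V)⁻¹ * Vᵀ).IsHermitian)
    (K : Matrix (Fin n) (Fin n) ℝ) (hKmp : IsMoorePenrose J K)
    (hK : K.IsHermitian) :
    ∀ i : Fin n, eigDesc hK i ≤ eigDesc hM i :=
  stmt6_general J hJ U S hU hdecomp V hV hdet hM K hKmp hK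
end

section
/- Let J ∈ ℝ^{n×n} be symmetric PSD of rank r and V ∈ ℝ^{n×r} with orthonormal columns such that Vᵀ J V is invertible. Then trace(V(VᵀJV)⁻¹Vᵀ) = trace((VᵀJV)⁻¹) = Σ_{k=1}^{r} 1/λ_k(VᵀJV), and this is minimized over all such V exactly when λ_k(VᵀJV) = λ_k(J) for all k ≤ r, which occurs when range(V) equals the column space of J. -/
open Matrix

/-!
Write `B = Vᵀ J V`. The two trace identities are cyclicity of the trace and the spectral
decomposition of `B⁻¹`. The comparison with `J` is Cauchy interlacing, `λ_k(B) ≤ λ_k(J)`, which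
comes from the Courant–Fischer principle: a subspace of dimension `k + 1` on which the Rayleigh
quotient of `J` is at least `c` meets the span of the eigenvectors of `λ_k(J), …, λ_{n-1}(J)`,
so `c ≤ λ_k(J)`; the image under `V` of the top `k + 1` eigenvectors of `B` is such a subspace.
Inverting termwise gives the lower bound on the trace and its equality case. When
`range J ⊆ range V`, the top eigenvectors of `J` with positive eigenvalue lie in `range V`, so
`Vᵀ` maps them isometrically onto a subspace on which the Rayleigh quotient of `B` is at least
`λ_k(J)`, which gives the reverse inequality.
-/

open Module Submodule

section QuadraticForm
variable {R n ι : Type*} [CommRing R] [Fintype n] [DecidableEq ι]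

lemma dotProduct_mulVec_sum_smul_of_orthonormal {A : Matrix n n R} {u : ι → n → R}
    (hu : ∀ i j, u i ⬝ᵥ u j = if i = j then 1 else 0) {μ : ι → R}
    (hμ : ∀ i, A *ᵥ u i = μ i • u i) (s : Finset ι) (c : ι → R) :
    (∑ i ∈ s, c i • u i) ⬝ᵥ (A *ᵥ ∑ i ∈ s, c i • u i) = ∑ i ∈ s, μ i * c i ^ 2 := by
  simp only [mulVec_sum, mulVec_smul, hμ, smul_smul, sum_dotProduct, dotProduct_sum,
    smul_dotProduct, dotProduct_smul, hu, smul_eq_mul, mul_ite, mul_one, mul_zero,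
    Finset.sum_ite_eq']
  exact Finset.sum_congr rfl fun i hi => by rw [if_pos hi]; ring

lemma dotProduct_sum_smul_self_of_orthonormal {u : ι → n → R}
    (hu : ∀ i j, u i ⬝ᵥ u j = if i = j then 1 else 0) (s : Finset ι) (c : ι → R) :
    (∑ i ∈ s, c i • u i) ⬝ᵥ (∑ i ∈ s, c i • u i) = ∑ i ∈ s, c i ^ 2 := by
  classical
  simpa using dotProduct_mulVec_sum_smul_of_orthonormal (A := 1) hu (μ := 1) (by simp) s c

end QuadraticForm

section TransposeMulMul
variable {R l p : Type*} [CommRing R] [Fintype l] [Fintype p]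

lemma mulVec_dotProduct_mulVec_mulVec (V : Matrix l p R) (A : Matrix l l R) (x y : p → R) :
    (V *ᵥ x) ⬝ᵥ (A *ᵥ (V *ᵥ y)) = x ⬝ᵥ ((Vᵀ * A * V) *ᵥ y) := by
  rw [dotProduct_comm, dotProduct_mulVec, ← mulVec_transpose, dotProduct_comm, ← mulVec_mulVec,
    ← mulVec_mulVec]

lemma mulVec_dotProduct_mulVec_of_transpose_mul_eq_one [DecidableEq p] {V : Matrix l p R}
    (hV : Vᵀ * V = 1) (x y : p → R) : (V *ᵥ x) ⬝ᵥ (V *ᵥ y) = x ⬝ᵥ y := by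
  classical
  simpa [hV] using mulVec_dotProduct_mulVec_mulVec V 1 x y

lemma mulVec_transpose_mulVec_of_mem_range [DecidableEq p] {V : Matrix l p R} (hV : Vᵀ * V = 1)
    {x : l → R} (hx : x ∈ LinearMap.range V.mulVecLin) : V *ᵥ (Vᵀ *ᵥ x) = x := by
  obtain ⟨y, rfl⟩ := hx
  rw [mulVecLin_apply]
  exact congrArg (V *ᵥ ·) (by rw [mulVec_mulVec, hV, one_mulVec])

lemma posSemidef_transpose_mul_mul_same {A : Matrix l l ℝ} (hA : A.PosSemidef) (V : Matrix l p ℝ) :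
    (Vᵀ * A * V).PosSemidef := by
  simpa using hA.conjTranspose_mul_mul_same V

end TransposeMulMul

section SortedEigenvectors
variable {m : ℕ} {A : Matrix (Fin m) (Fin m) ℝ} (hA : A.IsHermitian)

noncomputable def eigvecDesc (i : Fin m) : Fin m → ℝ :=
  hA.eigenvectorBasis (Tuple.sort hA.eigenvalues i.rev)

lemma mulVec_eigvecDesc (i : Fin m) : A *ᵥ eigvecDesc hA i = eigDesc hA i • eigvecDesc hA i :=
  hA.mulVec_eigenvectorBasis _

lemma eigvecDesc_dotProduct (i j : Fin m) :
    eigvecDesc hA i ⬝ᵥ eigvecDesc hA j = if i = j then 1 else 0 := by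
  have h := orthonormal_iff_ite.mp hA.eigenvectorBasis.orthonormal
    (Tuple.sort hA.eigenvalues j.rev) (Tuple.sort hA.eigenvalues i.rev)
  rw [EuclideanSpace.inner_eq_star_dotProduct] at h
  simpa [eigvecDesc, eq_comm] using h

lemma linearIndependent_eigvecDesc : LinearIndependent ℝ (eigvecDesc hA) := by
  have h := (hA.eigenvectorBasis.orthonormal.linearIndependent.comp _
    (Tuple.sort hA.eigenvalues).injective).comp _ Fin.rev_injective
  exact h.map' (WithLp.linearEquiv 2 ℝ (Fin m → ℝ)).toLinearMap (LinearEquiv.ker _)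

lemma eigDesc_antitone : Antitone (eigDesc hA) :=
  fun _ _ hij => Tuple.monotone_sort hA.eigenvalues (Fin.rev_le_rev.2 hij)

lemma sum_eigDesc_comp (f : ℝ → ℝ) : ∑ k, f (eigDesc hA k) = ∑ i, f (hA.eigenvalues i) :=
  Equiv.sum_comp (Fin.revPerm.trans (Tuple.sort hA.eigenvalues)) (f ∘ hA.eigenvalues)

lemma finrank_span_eigvecDesc_image (s : Finset (Fin m)) :
    finrank ℝ (span ℝ (eigvecDesc hA '' s)) = s.card := by
  rw [Set.image_eq_range]
  exact (finrank_span_eq_card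
    ((linearIndependent_eigvecDesc hA).comp _ Subtype.val_injective)).trans (Fintype.card_coe s)

lemma eigvecDesc_mem_range {i : Fin m} (hi : eigDesc hA i ≠ 0) :
    eigvecDesc hA i ∈ LinearMap.range A.mulVecLin :=
  ⟨(eigDesc hA i)⁻¹ • eigvecDesc hA i, by
    rw [mulVecLin_apply, mulVec_smul, mulVec_eigvecDesc, smul_smul, inv_mul_cancel₀ hi, one_smul]⟩

lemma eigDesc_nonneg {A : Matrix (Fin m) (Fin m) ℝ} (hA : A.PosSemidef) (k : Fin m) :
    0 ≤ eigDesc hA.1 k :=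
  hA.eigenvalues_nonneg _

end SortedEigenvectors

section MinMax
variable {m : ℕ} {A : Matrix (Fin m) (Fin m) ℝ} (hA : A.IsHermitian)

lemma dotProduct_mulVec_le_of_mem_span_Ici {k : Fin m} {x : Fin m → ℝ}
    (hx : x ∈ span ℝ (eigvecDesc hA '' Finset.Ici k)) :
    x ⬝ᵥ (A *ᵥ x) ≤ eigDesc hA k * (x ⬝ᵥ x) := by
  obtain ⟨c, rfl⟩ := (mem_span_image_finset_iff_exists_fun' ℝ).mp hx
  rw [dotProduct_mulVec_sum_smul_of_orthonormal (eigvecDesc_dotProduct hA) (mulVec_eigvecDesc hA),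
    dotProduct_sum_smul_self_of_orthonormal (eigvecDesc_dotProduct hA), Finset.mul_sum]
  exact Finset.sum_le_sum fun i hi =>
    mul_le_mul_of_nonneg_right (eigDesc_antitone hA (Finset.mem_Ici.mp hi)) (sq_nonneg _)

lemma le_dotProduct_mulVec_of_mem_span_Iic {k : Fin m} {x : Fin m → ℝ}
    (hx : x ∈ span ℝ (eigvecDesc hA '' Finset.Iic k)) :
    eigDesc hA k * (x ⬝ᵥ x) ≤ x ⬝ᵥ (A *ᵥ x) := by
  obtain ⟨c, rfl⟩ := (mem_span_image_finset_iff_exists_fun' ℝ).mp hx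
  rw [dotProduct_mulVec_sum_smul_of_orthonormal (eigvecDesc_dotProduct hA) (mulVec_eigvecDesc hA),
    dotProduct_sum_smul_self_of_orthonormal (eigvecDesc_dotProduct hA), Finset.mul_sum]
  exact Finset.sum_le_sum fun i hi =>
    mul_le_mul_of_nonneg_right (eigDesc_antitone hA (Finset.mem_Iic.mp hi)) (sq_nonneg _)

theorem le_eigDesc_of_le_dotProduct_mulVec {S : Submodule ℝ (Fin m → ℝ)} {k : Fin m}
    (hS : (k : ℕ) < finrank ℝ S) {c : ℝ} (hc : ∀ x ∈ S, c * (x ⬝ᵥ x) ≤ x ⬝ᵥ (A *ᵥ x)) :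
    c ≤ eigDesc hA k := by
  set T := span ℝ (eigvecDesc hA '' Finset.Ici k)
  have hT : finrank ℝ T = m - k := by rw [finrank_span_eigvecDesc_image, Fin.card_Ici]
  have hST : ¬Disjoint S T := fun h => by
    have := finrank_add_finrank_le_of_disjoint h
    rw [hT, finrank_fin_fun] at this
    omega
  obtain ⟨x, hxS, hxT, hx⟩ : ∃ x ∈ S, x ∈ T ∧ x ≠ 0 := by
    simpa [Submodule.disjoint_def] using hST
  have hpos : 0 < x ⬝ᵥ x := by
    simpa using dotProduct_star_self_pos_iff.mpr hx
  exact le_of_mul_le_mul_right ((hc x hxS).trans (dotProduct_mulVec_le_of_mem_span_Ici hA hxT)) hpos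

end MinMax

section Compression
variable {n r : ℕ}

theorem eigDesc_transpose_mul_mul_le {A : Matrix (Fin n) (Fin n) ℝ} (hA : A.IsHermitian)
    {V : Matrix (Fin n) (Fin r) ℝ} (hV : Vᵀ * V = 1) (hB : (Vᵀ * A * V).IsHermitian)
    (k : Fin r) (hk : (k : ℕ) < n) : eigDesc hB k ≤ eigDesc hA ⟨k, hk⟩ := by
  have hVinj : Function.Injective V.mulVecLin := fun x y h => by
    simpa [mulVec_mulVec, hV] using congrArg (Vᵀ *ᵥ ·) h
  set T := span ℝ (eigvecDesc hB '' Finset.Iic k)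
  refine le_eigDesc_of_le_dotProduct_mulVec hA (S := T.map V.mulVecLin) ?_ ?_
  · rw [(equivMapOfInjective _ hVinj T).finrank_eq.symm, finrank_span_eigvecDesc_image,
      Fin.card_Iic]
    exact Nat.lt_succ_self _
  · rintro _ ⟨y, hy, rfl⟩
    rw [mulVecLin_apply, mulVec_dotProduct_mulVec_mulVec,
      mulVec_dotProduct_mulVec_of_transpose_mul_eq_one hV]
    exact le_dotProduct_mulVec_of_mem_span_Iic hB hy

theorem eigDesc_le_eigDesc_transpose_mul_mul_of_range_le {A : Matrix (Fin n) (Fin n) ℝ}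
    (hA : A.PosSemidef) {V : Matrix (Fin n) (Fin r) ℝ} (hV : Vᵀ * V = 1)
    (hB : (Vᵀ * A * V).IsHermitian)
    (hrange : LinearMap.range A.mulVecLin ≤ LinearMap.range V.mulVecLin)
    (k : Fin r) (hk : (k : ℕ) < n) : eigDesc hA.1 ⟨k, hk⟩ ≤ eigDesc hB k := by
  set k' : Fin n := ⟨k, hk⟩
  rcases (eigDesc_nonneg hA k').eq_or_lt with hzero | hpos
  · rw [← hzero]
    exact eigDesc_nonneg (posSemidef_transpose_mul_mul_same hA V) k
  set T := span ℝ (eigvecDesc hA.1 '' Finset.Iic k')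
  have hTV : ∀ x ∈ T, V *ᵥ (Vᵀ *ᵥ x) = x := by
    refine fun x hx => mulVec_transpose_mulVec_of_mem_range hV (hrange (span_le.mpr ?_ hx))
    rintro _ ⟨i, hi, rfl⟩
    exact eigvecDesc_mem_range hA.1
      (hpos.trans_le (eigDesc_antitone hA.1 (Finset.mem_Iic.mp hi))).ne'
  have hinj : Function.Injective (Vᵀ.mulVecLin.domRestrict T) := fun x y h => by
    have h' := congrArg (V *ᵥ ·) h
    simp only [LinearMap.domRestrict_apply, mulVecLin_apply, hTV x x.2, hTV y y.2] at h'
    exact Subtype.ext h'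
  refine le_eigDesc_of_le_dotProduct_mulVec hB (S := T.map Vᵀ.mulVecLin) ?_ ?_
  · rw [← LinearMap.range_domRestrict, LinearMap.finrank_range_of_inj hinj,
      finrank_span_eigvecDesc_image, Fin.card_Iic]
    exact Nat.lt_succ_self _
  · rintro _ ⟨x, hx, rfl⟩
    have := le_dotProduct_mulVec_of_mem_span_Iic hA.1 hx
    rwa [← hTV x hx, mulVec_dotProduct_mulVec_mulVec,
      mulVec_dotProduct_mulVec_of_transpose_mul_eq_one hV] at this

end Compression

lemma Matrix.IsHermitian.trace_inv {l : Type*} [Fintype l] [DecidableEq l] {M : Matrix l l ℝ}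
    (hM : M.IsHermitian) (hdet : IsUnit M.det) : M⁻¹.trace = ∑ i, (hM.eigenvalues i)⁻¹ := by
  have hne : ∀ i, hM.eigenvalues i ≠ 0 := fun i hi => hdet.ne_zero <| by
    rw [hM.det_eq_prod_eigenvalues]
    exact Finset.prod_eq_zero (Finset.mem_univ i) (by simp [hi])
  have hD : (diagonal hM.eigenvalues)⁻¹ = diagonal hM.eigenvalues⁻¹ :=
    inv_eq_left_inv <| by simp [diagonal_mul_diagonal, hne]
  conv_lhs => rw [hM.spectral_theorem]
  simp only [Unitary.conjStarAlgAut_apply, RCLike.ofReal_real_eq_id, Function.id_comp]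
  rw [Matrix.mul_inv_rev, Matrix.mul_inv_rev, trace_mul_comm, Matrix.mul_assoc,
    ← Matrix.mul_inv_rev, Unitary.coe_star_mul_self, inv_one, Matrix.mul_one, hD,
    trace_diagonal, Pi.inv_def]

theorem stmt17_general {n r : ℕ} (hrn : r ≤ n)
    (J : Matrix (Fin n) (Fin n) ℝ) (hJ : J.PosSemidef)
    (V : Matrix (Fin n) (Fin r) ℝ) (hV : Vᵀ * V = 1)
    (hdet : IsUnit (Vᵀ * J * V).det) (hVJV : (Vᵀ * J * V).IsHermitian) :
    (V * (Vᵀ * J * V)⁻¹ * Vᵀ).trace = ((Vᵀ * J * V)⁻¹).trace ∧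
    ((Vᵀ * J * V)⁻¹).trace = ∑ k : Fin r, (eigDesc hVJV k)⁻¹ ∧
    (∑ k : Fin r, (eigDesc hJ.1 ⟨k, lt_of_lt_of_le k.isLt hrn⟩)⁻¹) ≤
      (V * (Vᵀ * J * V)⁻¹ * Vᵀ).trace ∧
    ((V * (Vᵀ * J * V)⁻¹ * Vᵀ).trace =
        ∑ k : Fin r, (eigDesc hJ.1 ⟨k, lt_of_lt_of_le k.isLt hrn⟩)⁻¹ ↔
      ∀ k : Fin r, eigDesc hVJV k = eigDesc hJ.1 ⟨k, lt_of_lt_of_le k.isLt hrn⟩) ∧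
    (LinearMap.range V.mulVecLin = LinearMap.range J.mulVecLin →
      ∀ k : Fin r, eigDesc hVJV k = eigDesc hJ.1 ⟨k, lt_of_lt_of_le k.isLt hrn⟩) := by
  have hpos : (Vᵀ * J * V).PosDef := (posSemidef_transpose_mul_mul_same hJ V).posDef_iff_isUnit.mpr
    ((isUnit_iff_isUnit_det _).mpr hdet)
  have htrace : (V * (Vᵀ * J * V)⁻¹ * Vᵀ).trace = ((Vᵀ * J * V)⁻¹).trace := by
    rw [trace_mul_cycle, hV, Matrix.one_mul]
  have hsum : ((Vᵀ * J * V)⁻¹).trace = ∑ k : Fin r, (eigDesc hVJV k)⁻¹ := by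
    rw [hVJV.trace_inv hdet, sum_eigDesc_comp hVJV (·⁻¹)]
  have hle (k : Fin r) : eigDesc hVJV k ≤ eigDesc hJ.1 ⟨k, lt_of_lt_of_le k.isLt hrn⟩ :=
    eigDesc_transpose_mul_mul_le hJ.1 hV hVJV k _
  have hinv (k : Fin r) :
      (eigDesc hJ.1 ⟨k, lt_of_lt_of_le k.isLt hrn⟩)⁻¹ ≤ (eigDesc hVJV k)⁻¹ :=
    inv_anti₀ (hpos.eigenvalues_pos _) (hle k)
  rw [htrace, hsum]
  refine ⟨rfl, rfl, Finset.sum_le_sum fun k _ => hinv k, ?_, fun hrange k =>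
    (hle k).antisymm (eigDesc_le_eigDesc_transpose_mul_mul_of_range_le hJ hV hVJV hrange.ge k _)⟩
  rw [eq_comm, Finset.sum_eq_sum_iff_of_le fun k _ => hinv k]
  simp [eq_comm]

theorem stmt17 {n r : ℕ} (hrn : r ≤ n)
    (J : Matrix (Fin n) (Fin n) ℝ) (hJ : J.PosSemidef) (hrank : J.rank = r)
    (V : Matrix (Fin n) (Fin r) ℝ) (hV : Vᵀ * V = 1)
    (hdet : IsUnit (Vᵀ * J * V).det) (hVJV : (Vᵀ * J * V).IsHermitian) :
    (V * (Vᵀ * J * V)⁻¹ * Vᵀ).trace = ((Vᵀ * J * V)⁻¹).trace ∧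
    ((Vᵀ * J * V)⁻¹).trace = ∑ k : Fin r, (eigDesc hVJV k)⁻¹ ∧
    (∑ k : Fin r, (eigDesc hJ.1 ⟨k, lt_of_lt_of_le k.isLt hrn⟩)⁻¹) ≤
      (V * (Vᵀ * J * V)⁻¹ * Vᵀ).trace ∧
    ((V * (Vᵀ * J * V)⁻¹ * Vᵀ).trace =
        ∑ k : Fin r, (eigDesc hJ.1 ⟨k, lt_of_lt_of_le k.isLt hrn⟩)⁻¹ ↔
      ∀ k : Fin r, eigDesc hVJV k = eigDesc hJ.1 ⟨k, lt_of_lt_of_le k.isLt hrn⟩) ∧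
    (LinearMap.range V.mulVecLin = LinearMap.range J.mulVecLin →
      ∀ k : Fin r, eigDesc hVJV k = eigDesc hJ.1 ⟨k, lt_of_lt_of_le k.isLt hrn⟩) :=
  stmt17_general hrn J hJ V hV hdet hVJV
end
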